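/- arXiv:2408.15506 — 2 statements merged into one kernel-verified Lean document; each statement's English description precedes it below -/
import Mathlib

section
/- For all integers n ≥ 3 and 2 ≤ d ≤ n−1, the real polynomials g_{n,d}(t) satisfy the triangular recurrence ((n−2d)(n+1−2d)·t + (d−1)²)·g_{n,d}(t) = (d−1)(n−d)·g_{n,d−1}(t) + (n+1−2d)(n−1−d)·t·g_{n−1,d}(t). -/
open Polynomial

/-- Speyer's g-polynomial of the uniform matroid `U_{n,d}` as a real polynomial:
`g_{n,d}(t) = Σ_{i=1}^{min(d, n-d)} ((n-i-1)! / ((d-i)! (n-d-i)! (i-1)!)) t^i`.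
When `d = 0` or `d = n` the sum is empty, so `gPoly n d = 0`, matching the convention. -/
noncomputable def gPoly (n d : ℕ) : Polynomial ℝ :=
  ∑ i ∈ Finset.Icc 1 (min d (n - d)),
    C ((Nat.factorial (n - i - 1) : ℝ) /
        ((Nat.factorial (d - i) : ℝ) * (Nat.factorial (n - d - i) : ℝ) *
          (Nat.factorial (i - 1) : ℝ))) * X ^ i

lemma coeff_gPoly (n d k : ℕ) : (gPoly n d).coeff k =
    if 1 ≤ k ∧ k ≤ d ∧ k ≤ n - d then
      (Nat.factorial (n - k - 1) : ℝ) /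
        ((Nat.factorial (d - k) : ℝ) * (Nat.factorial (n - d - k) : ℝ) *
          (Nat.factorial (k - 1) : ℝ)) else 0 := by
  unfold gPoly
  rw [Polynomial.finset_sum_coeff]
  simp only [Polynomial.coeff_C_mul, Polynomial.coeff_X_pow, mul_ite, mul_one, mul_zero]
  rw [Finset.sum_ite_eq (Finset.Icc 1 (min d (n-d))) k]
  simp [Finset.mem_Icc, le_min_iff, and_assoc]


set_option maxHeartbeats 2000000 in
/-- Triangular recurrence
`((n-2d)(n+1-2d) t + (d-1)^2) g_{n,d} = (d-1)(n-d) g_{n,d-1} + (n+1-2d)(n-1-d) t g_{n-1,d}`. -/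
theorem gPoly_triangular_recurrence₂ (n d : ℕ) (hn : 3 ≤ n) (hd : 2 ≤ d) (hd2 : d ≤ n - 1) :
    (C (((n : ℝ) - 2 * d) * ((n : ℝ) + 1 - 2 * d)) * X + C (((d : ℝ) - 1) ^ 2)) * gPoly n d =
      C (((d : ℝ) - 1) * ((n : ℝ) - d)) * gPoly n (d - 1) +
        C (((n : ℝ) + 1 - 2 * d) * ((n : ℝ) - 1 - d)) * X * gPoly (n - 1) d := by
  have h0 : ∀ m : ℕ, (Nat.factorial m : ℝ) ≠ 0 := fun m =>
    Nat.cast_ne_zero.mpr (Nat.factorial_ne_zero m)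
  have efac : ∀ m : ℕ, (Nat.factorial (m+1) : ℝ) = ((m:ℝ)+1) * (Nat.factorial m : ℝ) := by
    intro m; rw [Nat.factorial_succ]; push_cast; ring
  apply Polynomial.ext
  intro m
  rw [show (C (((n : ℝ) - 2 * d) * ((n : ℝ) + 1 - 2 * d)) * X + C (((d : ℝ) - 1) ^ 2)) * gPoly n d
      = C (((n : ℝ) - 2 * d) * ((n : ℝ) + 1 - 2 * d)) * (X * gPoly n d) + C (((d : ℝ) - 1) ^ 2) * gPoly n d from by ring,
     show C (((n : ℝ) + 1 - 2 * d) * ((n : ℝ) - 1 - d)) * X * gPoly (n - 1) d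
      = C (((n : ℝ) + 1 - 2 * d) * ((n : ℝ) - 1 - d)) * (X * gPoly (n - 1) d) from by ring]
  simp only [Polynomial.coeff_add, Polynomial.coeff_C_mul]
  cases m with
  | zero =>
    simp [Polynomial.mul_coeff_zero, coeff_gPoly]
  | succ k =>
    rw [Polynomial.coeff_X_mul, Polynomial.coeff_X_mul, coeff_gPoly, coeff_gPoly, coeff_gPoly, coeff_gPoly]
    split_ifs <;> rename_i h1 h2 h3 h4
    -- 1: TTTT interior
    · obtain ⟨A, hA1, hA2⟩ : ∃ A, n - (k+1) - 1 = A ∧ n = A + k + 2 := ⟨_, rfl, by omega⟩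
      obtain ⟨P, hP1, hP2⟩ : ∃ P, d - 1 - (k+1) = P ∧ d = P + k + 2 := ⟨_, rfl, by omega⟩
      obtain ⟨Q, hQ1, hQ2⟩ : ∃ Q, n - d - (k+1) = Q ∧ Q + (P + k + 1) = A := ⟨_, rfl, by omega⟩
      obtain ⟨J, hJ1, hJ2⟩ : ∃ J, k - 1 = J ∧ J + 1 = k := ⟨_, rfl, by omega⟩
      rw [show n - k - 1 = A + 1 from by omega, show n - 1 - k - 1 = A from by omega,
          show d - k = P + 2 from by omega, show d - (k+1) = P + 1 from by omega, hP1,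
          show n - d - k = Q + 1 from by omega, hQ1,
          show n - (d-1) - (k+1) = Q + 1 from by omega,
          show n - 1 - d - k = Q from by omega,
          show k + 1 - 1 = J + 1 from by omega, hJ1, hA1]
      have cn : (n:ℝ) = (A:ℝ) + k + 2 := by exact_mod_cast hA2
      have cd : (d:ℝ) = (P:ℝ) + k + 2 := by exact_mod_cast hP2
      have cq : (Q:ℝ) = (A:ℝ) - P - k - 1 := by
        have h' : (Q:ℝ) + ((P:ℝ) + k + 1) = A := by exact_mod_cast hQ2
        linarith
      have cj : (J:ℝ) = (k:ℝ) - 1 := by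
        have h' : (J:ℝ) + 1 = k := by exact_mod_cast hJ2
        linarith
      field_simp [h0]
      rw [show P + 2 = (P+1)+1 from rfl, efac (P+1), efac P, efac A, efac Q, efac J,
          cn, cd, cq, cj]
      push_cast
      ring
    -- 2: TTTF contradiction
    · exfalso; omega
    -- 3: TTFT, k = d-1
    · obtain ⟨A, hA1, hA2⟩ : ∃ A, n - (k+1) - 1 = A ∧ n = A + k + 2 := ⟨_, rfl, by omega⟩
      obtain ⟨Q, hQ1, hQ2⟩ : ∃ Q, n - d - (k+1) = Q ∧ Q + (d + k + 1) = n := ⟨_, rfl, by omega⟩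
      obtain ⟨J, hJ1, hJ2⟩ : ∃ J, k - 1 = J ∧ J + 1 = k := ⟨_, rfl, by omega⟩
      rw [show n - k - 1 = A + 1 from by omega, show n - 1 - k - 1 = A from by omega,
          show d - k = 1 from by omega, show d - (k+1) = 0 from by omega,
          show n - d - k = Q + 1 from by omega, hQ1,
          show n - 1 - d - k = Q from by omega,
          show k + 1 - 1 = J + 1 from by omega, hJ1, hA1]
      have cn : (n:ℝ) = (A:ℝ) + k + 2 := by exact_mod_cast hA2
      have cd : (d:ℝ) = (k:ℝ) + 1 := by
        have : d = k + 1 := by omega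
        exact_mod_cast this
      have cq : (Q:ℝ) = (A:ℝ) - k := by
        have h' : (Q:ℝ) + ((d:ℝ) + k + 1) = n := by exact_mod_cast hQ2
        rw [cd, cn] at h'; linarith
      have cj : (J:ℝ) = (k:ℝ) - 1 := by
        have h' : (J:ℝ) + 1 = k := by exact_mod_cast hJ2
        linarith
      simp only [Nat.factorial_one, Nat.factorial_zero, Nat.cast_one]
      field_simp [h0]
      rw [efac A, efac Q, efac J, cn, cd, cq, cj]
      push_cast
      ring
    -- 4: TTFF contradiction
    · exfalso; omega
    -- 5: TFTT contradiction
    · exfalso; omega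
    -- 6: TFTF, k = n-d
    · obtain ⟨A, hA1, hA2⟩ : ∃ A, n - (k+1) - 1 = A ∧ n = A + k + 2 := ⟨_, rfl, by omega⟩
      obtain ⟨P, hP1, hP2⟩ : ∃ P, d - 1 - (k+1) = P ∧ d = P + k + 2 := ⟨_, rfl, by omega⟩
      obtain ⟨J, hJ1, hJ2⟩ : ∃ J, k - 1 = J ∧ J + 1 = k := ⟨_, rfl, by omega⟩
      rw [show n - k - 1 = A + 1 from by omega,
          show d - k = P + 2 from by omega,
          show n - d - k = 0 from by omega,
          show d - 1 - (k+1) = P from hP1,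
          show n - (d-1) - (k+1) = 0 from by omega,
          show k + 1 - 1 = J + 1 from by omega, hJ1, hA1]
      have cn : (n:ℝ) = (A:ℝ) + k + 2 := by exact_mod_cast hA2
      have cd : (d:ℝ) = (P:ℝ) + k + 2 := by exact_mod_cast hP2
      have ca : (A:ℝ) = (P:ℝ) + k := by
        have : A = P + k := by omega
        exact_mod_cast this
      have cj : (J:ℝ) = (k:ℝ) - 1 := by
        have h' : (J:ℝ) + 1 = k := by exact_mod_cast hJ2
        linarith
      simp only [Nat.factorial_zero, Nat.cast_one]
      field_simp [h0]
      rw [show P + 2 = (P+1)+1 from rfl, efac (P+1), efac P, efac A, efac J,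
          cn, cd, cj, ca]
      push_cast
      ring
    -- 7: TFFT, k = d
    · obtain ⟨A, hA1, hA2⟩ : ∃ A, n - 1 - k - 1 = A ∧ n = A + k + 2 := ⟨_, rfl, by omega⟩
      obtain ⟨Q, hQ1, hQ2⟩ : ∃ Q, n - 1 - d - k = Q ∧ Q + (d + k + 1) = n := ⟨_, rfl, by omega⟩
      obtain ⟨J, hJ1, _⟩ : ∃ J, k - 1 = J ∧ J + 1 = k := ⟨_, rfl, by omega⟩
      rw [show n - k - 1 = A + 1 from by omega,
          show d - k = 0 from by omega,
          show n - d - k = Q + 1 from by omega, hQ1, hJ1, hA1]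
      have cn : (n:ℝ) = (A:ℝ) + k + 2 := by exact_mod_cast hA2
      have cd : (d:ℝ) = (k:ℝ) := by
        have : d = k := by omega
        exact_mod_cast this
      have cq : (Q:ℝ) = (A:ℝ) - k + 1 := by
        have h' : (Q:ℝ) + ((d:ℝ) + k + 1) = n := by exact_mod_cast hQ2
        rw [cd, cn] at h'; linarith
      simp only [Nat.factorial_zero, Nat.cast_one]
      field_simp [h0]
      rw [efac A, efac Q, cn, cd, cq]
      push_cast
      ring
    -- 8: TFFF, coefficient vanishes
    · have h5 : n + 1 = 2*d ∨ n = 2*d := by omega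
      have h6 : ((n:ℝ) - 2 * (d:ℝ)) * ((n:ℝ) + 1 - 2 * (d:ℝ)) = 0 := by
        rcases h5 with h | h
        · have h' : (n:ℝ) + 1 = 2 * d := by exact_mod_cast h
          have hz : (n:ℝ) + 1 - 2 * (d:ℝ) = 0 := by linarith
          rw [hz, mul_zero]
        · have h' : (n:ℝ) = 2 * d := by exact_mod_cast h
          have hz : (n:ℝ) - 2 * (d:ℝ) = 0 := by linarith
          rw [hz, zero_mul]
      rw [h6]
      ring
    -- 9: FTTT contradiction
    · exfalso; omega
    -- 10: FTTF, k = 0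
    · have hk : k = 0 := by omega
      subst hk
      obtain ⟨A, hA1, hA2⟩ : ∃ A, n - (0+1) - 1 = A ∧ n = A + 2 := ⟨_, rfl, by omega⟩
      obtain ⟨P, hP1, hP2⟩ : ∃ P, d - 1 - (0+1) = P ∧ d = P + 2 := ⟨_, rfl, by omega⟩
      obtain ⟨Q, hQ1, hQ2⟩ : ∃ Q, n - d - (0+1) = Q ∧ Q + P + 1 = A := ⟨_, rfl, by omega⟩
      rw [show n - (d-1) - (0+1) = Q + 1 from by omega,
          show d - 1 - (0+1) = P from hP1,
          show n - (0+1) - 1 = A from hA1,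
          show n - d - (0+1) = Q from hQ1,
          show d - (0+1) = P + 1 from by omega,
          show 0 + 1 - 1 = 0 from rfl]
      have cd : (d:ℝ) = (P:ℝ) + 2 := by exact_mod_cast hP2
      have cn : (n:ℝ) = (A:ℝ) + 2 := by exact_mod_cast hA2
      have cq : (Q:ℝ) = (A:ℝ) - P - 1 := by
        have h' : (Q:ℝ) + P + 1 = A := by exact_mod_cast hQ2
        linarith
      simp only [Nat.factorial_zero, Nat.cast_one]
      field_simp [h0]
      rw [efac P, efac Q, cn, cd, cq]
      push_cast
      ring
    -- 11: FTFT contradiction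
    · exfalso; omega
    -- 12: FTFF contradiction
    · exfalso; omega
    -- 13: FFTT contradiction
    · exfalso; omega
    -- 14: FFTF contradiction
    · exfalso; omega
    -- 15: FFFT contradiction
    · exfalso; omega
    -- 16: FFFF
    · ring
end

section
/- For every fixed integer d ≥ 3 and every integer n ≥ d+1, the polynomials g_{n,d}(t) and g_{n+1,d}(t) have only real zeros and g_{n,d}(t) interlaces g_{n+1,d}(t), i.e. g_{n,d} ⪯ g_{n+1,d}; consequently, the sequence {g_{n,d}(t)}_{n ≥ d+1} is a generalized Sturm sequence. -/
open Polynomial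

/-- A real polynomial is real-rooted (has only real zeros) if its number of real roots,
counted with multiplicity, equals its degree. -/
def RealRooted (f : Polynomial ℝ) : Prop :=
  Multiset.card f.roots = f.natDegree

/-- The real roots of `f`, with multiplicity, listed in increasing order. -/
noncomputable def ascRoots (f : Polynomial ℝ) : List ℝ :=
  f.roots.sort (· ≤ ·)

/-- `Interlaces g f` means `g ⪯ f`: both polynomials are real-rooted and, writing the
roots of `f` in decreasing order as `α_1 ≥ α_2 ≥ ⋯` and those of `g` as `β_1 ≥ β_2 ≥ ⋯`
(equivalently, in increasing order as `a_1 ≤ ⋯ ≤ a_m` and `b_1 ≤ ⋯`), either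
`deg f = deg g = m` and `β_m ≤ α_m ≤ β_{m-1} ≤ ⋯ ≤ β_1 ≤ α_1`
(i.e. `b_1 ≤ a_1 ≤ b_2 ≤ a_2 ≤ ⋯ ≤ b_m ≤ a_m`), or `deg f = deg g + 1 = m` and
`α_m ≤ β_{m-1} ≤ α_{m-1} ≤ ⋯ ≤ β_1 ≤ α_1` (i.e. `a_1 ≤ b_1 ≤ a_2 ≤ ⋯ ≤ b_{m-1} ≤ a_m`);
by convention `0 ⪯ f` and `f ⪯ 0` for any real-rooted `f` (and the convention
`a ⪯ bt + c` for constants is subsumed by the two degree cases, whose conditions are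
then vacuous). -/
def Interlaces (g f : Polynomial ℝ) : Prop :=
  RealRooted g ∧ RealRooted f ∧
    (g = 0 ∨ f = 0 ∨
      (f.natDegree = g.natDegree ∧
        (∀ i < f.natDegree, (ascRoots g).getD i 0 ≤ (ascRoots f).getD i 0) ∧
        (∀ i, i + 1 < f.natDegree → (ascRoots f).getD i 0 ≤ (ascRoots g).getD (i + 1) 0)) ∨
      (f.natDegree = g.natDegree + 1 ∧
        (∀ i < g.natDegree, (ascRoots f).getD i 0 ≤ (ascRoots g).getD i 0) ∧
        (∀ i < g.natDegree, (ascRoots g).getD i 0 ≤ (ascRoots f).getD (i + 1) 0)))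

noncomputable def gc (n d i : ℕ) : ℝ :=
  (Nat.factorial (n - i - 1) : ℝ) /
    ((Nat.factorial (d - i) : ℝ) * (Nat.factorial (n - d - i) : ℝ) *
      (Nat.factorial (i - 1) : ℝ))

lemma gc_pos (n d i : ℕ) : 0 < gc n d i := by
  unfold gc
  positivity

lemma gPoly_coeff (n d i : ℕ) :
    (gPoly n d).coeff i = if 1 ≤ i ∧ i ≤ min d (n - d) then gc n d i else 0 := by
  rw [gPoly, finset_sum_coeff]
  simp only [coeff_C_mul, coeff_X_pow, mul_ite, mul_one, mul_zero]
  rw [Finset.sum_ite_eq (Finset.Icc 1 (min d (n-d))) i]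
  simp [Finset.mem_Icc, gc]

lemma gPoly_natDegree {n d : ℕ} (hd : 1 ≤ d) (hn : d + 1 ≤ n) :
    (gPoly n d).natDegree = min d (n - d) := by
  have hm : 1 ≤ min d (n - d) := by omega
  apply le_antisymm
  · rw [natDegree_le_iff_coeff_eq_zero]
    intro N hN
    rw [gPoly_coeff]
    simp only [ite_eq_right_iff]
    intro h; omega
  · apply le_natDegree_of_ne_zero
    rw [gPoly_coeff]
    have := gc_pos n d (min d (n-d))
    simp only [le_refl, and_true, hm, if_true]
    positivity

lemma gPoly_ne_zero {n d : ℕ} (hd : 1 ≤ d) (hn : d + 1 ≤ n) : gPoly n d ≠ 0 := by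
  intro h
  have := gPoly_coeff n d (min d (n - d))
  rw [h] at this
  simp only [coeff_zero] at this
  have hm : 1 ≤ min d (n - d) := by omega
  rw [if_pos ⟨hm, le_refl _⟩] at this
  have h2 := gc_pos n d (min d (n-d))
  linarith

lemma gPoly_leadingCoeff_pos {n d : ℕ} (hd : 1 ≤ d) (hn : d + 1 ≤ n) :
    0 < (gPoly n d).leadingCoeff := by
  rw [leadingCoeff, gPoly_natDegree hd hn, gPoly_coeff]
  have hm : 1 ≤ min d (n - d) := by omega
  rw [if_pos ⟨hm, le_refl _⟩]
  exact gc_pos _ _ _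

lemma gPoly_base {d : ℕ} (hd : 1 ≤ d) : gPoly (d + 1) d = X := by
  have h1 : d + 1 - d = 1 := by omega
  have h2 : min d 1 = 1 := by omega
  rw [gPoly, h1, h2]
  rw [Finset.Icc_self, Finset.sum_singleton]
  have e1 : d + 1 - 1 - 1 = d - 1 := by omega
  rw [e1]
  have : ((d-1).factorial : ℝ) ≠ 0 := by positivity
  norm_num [Nat.factorial]
  field_simp
  exact C_1


lemma listProdPos (l : List ℝ) (h : ∀ x ∈ l, 0 < x) : 0 < l.prod := List.prod_pos h

lemma listProdNeg (l : List ℝ) (h : ∀ x ∈ l, x < 0) : 0 < (-1:ℝ)^l.length * l.prod := by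
  induction l with
  | nil => simp
  | cons a t ih =>
      have ha : a < 0 := h a (by simp)
      have ht := ih (fun x hx => h x (by simp [hx]))
      have : (-1:ℝ)^(a :: t).length * (a :: t).prod = (-a) * ((-1:ℝ)^t.length * t.prod) := by
        simp [List.length_cons, List.prod_cons, pow_succ]
        ring
      rw [this]
      exact mul_pos (by linarith) ht

lemma exists_root_between {p : Polynomial ℝ} {x y : ℝ} (hxy : x < y)
    (h : eval x p * eval y p < 0) : ∃ z, x < z ∧ z < y ∧ eval z p = 0 := by
  have hc : ContinuousOn (fun t => eval t p) (Set.Icc x y) := (p.continuous).continuousOn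
  rcases lt_or_ge (eval x p) 0 with hx | hx
  · have hy : 0 < eval y p := by nlinarith
    have : (0:ℝ) ∈ Set.Ioo (eval x p) (eval y p) := ⟨hx, hy⟩
    obtain ⟨z, hz, hz0⟩ := intermediate_value_Ioo (le_of_lt hxy) hc this
    exact ⟨z, hz.1, hz.2, hz0⟩
  · have hne : eval x p ≠ 0 := by intro h0; rw [h0] at h; simp at h
    have hx' : 0 < eval x p := hx.lt_of_ne (Ne.symm hne)
    have hy : eval y p < 0 := by nlinarith
    have : (0:ℝ) ∈ Set.Ioo (eval y p) (eval x p) := ⟨hy, hx'⟩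
    obtain ⟨z, hz, hz0⟩ := intermediate_value_Ioo' (le_of_lt hxy) hc this
    exact ⟨z, hz.1, hz.2, hz0⟩

lemma exists_neg_sign {p : Polynomial ℝ} (hdeg : 0 < p.degree) (hl : 0 < p.leadingCoeff)
    (y : ℝ) : ∃ x, x < y ∧ 0 < (-1:ℝ)^(p.natDegree) * eval x p := by
  set q : Polynomial ℝ := C ((-1:ℝ)^p.natDegree) * p.comp (-X) with hq
  have hcompdeg : (p.comp (-X)).natDegree = p.natDegree := by
    rw [natDegree_comp]
    simp
  have hlc : q.leadingCoeff = p.leadingCoeff := by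
    rw [hq, leadingCoeff_mul, leadingCoeff_C, leadingCoeff_comp (by simp)]
    simp only [leadingCoeff_neg, leadingCoeff_X]
    have h1 : (-1:ℝ)^p.natDegree * (-1)^p.natDegree = 1 := by
      rw [← pow_add, ← two_mul, pow_mul]; norm_num
    ring_nf
    ring_nf at h1
    nlinarith [h1]
  have hqne : q ≠ 0 := by
    intro h0
    rw [h0] at hlc
    rw [leadingCoeff_zero] at hlc
    exact absurd hlc.symm (ne_of_gt hl)
  have hpcne : p.comp (-X) ≠ 0 := right_ne_zero_of_mul (hq ▸ hqne)
  have hnd : q.natDegree = p.natDegree := by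
    rw [hq, natDegree_mul (by
      apply C_ne_zero.mpr
      exact pow_ne_zero _ (by norm_num)) hpcne, natDegree_C, hcompdeg, zero_add]
  have hpnd : 0 < p.natDegree := natDegree_pos_iff_degree_pos.mpr hdeg
  have hdq : 0 < q.degree := by
    rw [degree_eq_natDegree hqne]
    have : 0 < q.natDegree := by omega
    exact_mod_cast this
  have htend := Polynomial.tendsto_atTop_of_leadingCoeff_nonneg q hdq (le_of_lt (hlc ▸ hl))
  have hev : ∀ᶠ x in Filter.atTop, 0 < eval x q ∧ -y < x :=
    (htend.eventually_gt_atTop 0).and (Filter.eventually_gt_atTop (-y))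
  obtain ⟨x, hx1, hx2⟩ := hev.exists
  refine ⟨-x, by linarith, ?_⟩
  have : eval x q = (-1:ℝ)^p.natDegree * eval (-x) p := by
    rw [hq]
    simp [eval_comp]
  linarith [this ▸ hx1]


lemma fact_eq {p : Polynomial ℝ} {L : List ℝ}
    (hroots : p.roots = ↑L) (hcard : L.length = p.natDegree) :
    p = C p.leadingCoeff * (L.map (fun a => X - C a)).prod := by
  have h := C_leadingCoeff_mul_prod_multiset_X_sub_C (p := p)
    (by rw [hroots]; simpa using hcard)
  rw [hroots, Multiset.map_coe, Multiset.prod_coe] at h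
  exact h.symm

lemma eval_fact {p : Polynomial ℝ} {L : List ℝ}
    (hroots : p.roots = ↑L) (hcard : L.length = p.natDegree) (x : ℝ) :
    eval x p = p.leadingCoeff * (L.map (fun a => x - a)).prod := by
  conv_lhs => rw [fact_eq hroots hcard]
  rw [eval_mul, eval_C, eval_list_prod, List.map_map]
  congr 1
  refine congrArg List.prod (List.map_congr_left ?_)
  intro a _
  simp

lemma deriv_eval_root {p : Polynomial ℝ} {M₁ M₂ : List ℝ} {b : ℝ}
    (hroots : p.roots = ↑(M₁ ++ b :: M₂)) (hcard : (M₁ ++ b :: M₂).length = p.natDegree) :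
    eval b (derivative p) =
      p.leadingCoeff * ((M₁ ++ M₂).map (fun a => b - a)).prod := by
  have hp := fact_eq hroots hcard
  set h : Polynomial ℝ := C p.leadingCoeff * ((M₁ ++ M₂).map (fun a => X - C a)).prod with hh
  have hp2 : p = (X - C b) * h := by
    rw [hp, hh, List.map_append, List.map_append, List.map_cons, List.prod_append,
      List.prod_append, List.prod_cons]
    ring
  have : derivative p = h + (X - C b) * derivative h := by
    rw [hp2, derivative_mul]
    simp
  rw [this]
  simp only [eval_add, eval_mul, eval_sub, eval_X, eval_C, sub_self, zero_mul, add_zero, zero_add]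
  rw [hh]
  simp only [eval_mul, eval_C, eval_list_prod, List.map_map]
  congr 1
  refine congrArg List.prod (List.map_congr_left ?_)
  intro a _
  simp

lemma deriv_sign_root {p : Polynomial ℝ} {M₁ M₂ : List ℝ} {b : ℝ}
    (hroots : p.roots = ↑(M₁ ++ b :: M₂)) (hcard : (M₁ ++ b :: M₂).length = p.natDegree)
    (hlc : 0 < p.leadingCoeff)
    (h₁ : ∀ x ∈ M₁, x < b) (h₂ : ∀ x ∈ M₂, b < x) :
    0 < (-1:ℝ)^(M₂.length) * eval b (derivative p) := by
  rw [deriv_eval_root hroots hcard]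
  rw [List.map_append, List.prod_append]
  have hP1 : 0 < (M₁.map (fun a => b - a)).prod := by
    apply listProdPos
    intro x hx
    obtain ⟨a, ha, rfl⟩ := List.mem_map.mp hx
    have := h₁ a ha
    linarith
  have hP2 : 0 < (-1:ℝ)^(M₂.length) * (M₂.map (fun a => b - a)).prod := by
    have := listProdNeg (M₂.map (fun a => b - a)) (by
      intro x hx
      obtain ⟨a, ha, rfl⟩ := List.mem_map.mp hx
      have := h₂ a ha
      linarith)
    simpa using this
  nlinarith [mul_pos hlc hP1, hP2]



-- scalar identity, case i = 1
lemma key1 {d n : ℕ} (hd : 1 ≤ d) (hn : d + 1 ≤ n) :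
    ((n:ℝ) - d) * gc (n+1) d 1 = ((n:ℝ) - 1) * gc n d 1 := by
  obtain ⟨p, rfl⟩ : ∃ p, d = p + 1 := ⟨d - 1, by omega⟩
  obtain ⟨q, rfl⟩ : ∃ q, n = p + q + 2 := ⟨n - p - 2, by omega⟩
  unfold gc
  have e1 : p + q + 2 + 1 - 1 - 1 = p + q + 1 := by omega
  have e2 : p + 1 - 1 = p := by omega
  have e3 : p + q + 2 + 1 - (p + 1) - 1 = q + 1 := by omega
  have e4 : p + q + 2 - 1 - 1 = p + q := by omega
  have e5 : p + q + 2 - (p + 1) - 1 = q := by omega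
  rw [e1, e2, e3, e4, e5]
  have hp : (0:ℝ) < p.factorial := by positivity
  have hq : (0:ℝ) < q.factorial := by positivity
  rw [Nat.factorial_succ q, Nat.factorial_succ (p+q)]
  push_cast
  field_simp
  ring

-- scalar identity, main interior case : i = s+2 with i ≤ min d (n-d)
lemma keyA {d n s : ℕ} (h2 : s + 2 ≤ d) (h3 : s + 2 ≤ n - d) :
    ((n:ℝ) - d) * gc (n+1) d (s+2)
      = (n:ℝ) * gc n d (s+2) + (d:ℝ) * gc n d (s+1)
        - (gc n d (s+2) * (s+2) + gc n d (s+1) * (s+1)) := by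
  obtain ⟨p, rfl⟩ : ∃ p, d = s + 2 + p := ⟨d - (s+2), by omega⟩
  obtain ⟨q, rfl⟩ : ∃ q, n = (s + 2 + p) + (s + 2 + q) := ⟨n - (s+2+p) - (s+2), by omega⟩
  unfold gc
  have e1 : s + 2 + p + (s + 2 + q) + 1 - (s + 2) - 1 = s + p + q + 2 := by omega
  have e2 : s + 2 + p - (s + 2) = p := by omega
  have e3 : s + 2 + p + (s + 2 + q) + 1 - (s + 2 + p) - (s + 2) = q + 1 := by omega
  have e4 : s + 2 - 1 = s + 1 := by omega
  have e5 : s + 2 + p + (s + 2 + q) - (s + 2) - 1 = s + p + q + 1 := by omega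
  have e6 : s + 2 + p + (s + 2 + q) - (s + 2 + p) - (s + 2) = q := by omega
  have e7 : s + 2 + p + (s + 2 + q) - (s + 1) - 1 = s + p + q + 2 := by omega
  have e8 : s + 2 + p - (s + 1) = p + 1 := by omega
  have e9 : s + 2 + p + (s + 2 + q) - (s + 2 + p) - (s + 1) = q + 1 := by omega
  have e10 : s + 1 - 1 = s := by omega
  rw [e1, e2, e3, e4, e5, e6, e7, e8, e9, e10]
  have hp : (0:ℝ) < p.factorial := by positivity
  have hq : (0:ℝ) < q.factorial := by positivity
  have hs : (0:ℝ) < s.factorial := by positivity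
  have hx : (0:ℝ) < (s+p+q+1).factorial := by positivity
  rw [Nat.factorial_succ q, Nat.factorial_succ s, Nat.factorial_succ p,
    show s+p+q+2 = (s+p+q+1)+1 from rfl, Nat.factorial_succ (s+p+q+1)]
  push_cast
  field_simp
  ring

-- scalar identity, boundary case : i = k+1, k = n - d < d
lemma keyB {d n s : ℕ} (hk : n - d = s + 1) (hlt : s + 2 ≤ d) (hn : d ≤ n) :
    ((n:ℝ) - d) * gc (n+1) d (s+2)
      = (d:ℝ) * gc n d (s+1) - gc n d (s+1) * (s+1) := by
  obtain ⟨p, rfl⟩ : ∃ p, d = s + 2 + p := ⟨d - (s+2), by omega⟩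
  obtain ⟨rfl⟩ : n = (s + 2 + p) + (s + 1) := by omega
  unfold gc
  have e1 : s + 2 + p + (s + 1) + 1 - (s + 2) - 1 = s + p + 1 := by omega
  have e2 : s + 2 + p - (s + 2) = p := by omega
  have e3 : s + 2 + p + (s + 1) + 1 - (s + 2 + p) - (s + 2) = 0 := by omega
  have e4 : s + 2 - 1 = s + 1 := by omega
  have e5 : s + 2 + p + (s + 1) - (s + 1) - 1 = s + p + 1 := by omega
  have e6 : s + 2 + p - (s + 1) = p + 1 := by omega
  have e7 : s + 2 + p + (s + 1) - (s + 2 + p) - (s + 1) = 0 := by omega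
  have e8 : s + 1 - 1 = s := by omega
  rw [e1, e2, e3, e4, e5, e6, e7, e8]
  have hp : (0:ℝ) < p.factorial := by positivity
  have hs : (0:ℝ) < s.factorial := by positivity
  rw [Nat.factorial_succ s, Nat.factorial_succ p, Nat.factorial_zero]
  push_cast
  field_simp
  ring


lemma gPoly_rec {d n : ℕ} (hd : 1 ≤ d) (hn : d + 1 ≤ n) :
    C ((n:ℝ) - d) * gPoly (n+1) d =
      (C (n:ℝ) + C (d:ℝ) * X) * gPoly n d - X * ((1 + X) * derivative (gPoly n d)) := by
  have expand : (C (n:ℝ) + C (d:ℝ) * X) * gPoly n d - X * ((1 + X) * derivative (gPoly n d))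
      = C (n:ℝ) * gPoly n d + C (d:ℝ) * (X * gPoly n d)
        - X * (derivative (gPoly n d) + X * derivative (gPoly n d)) := by ring
  rw [expand]
  ext i
  rw [coeff_C_mul, coeff_sub, coeff_add, coeff_C_mul, coeff_C_mul]
  match i with
  | 0 =>
      simp only [mul_coeff_zero, coeff_X_zero, zero_mul, gPoly_coeff]
      norm_num
  | 1 =>
      rw [coeff_X_mul, coeff_X_mul, coeff_add, coeff_derivative, mul_coeff_zero, coeff_X_zero,
        zero_mul]
      simp only [gPoly_coeff]
      have h1 : (1 ≤ 1 ∧ 1 ≤ min d (n + 1 - d)) := ⟨le_refl 1, by omega⟩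
      have h2 : (1 ≤ 1 ∧ 1 ≤ min d (n - d)) := ⟨le_refl 1, by omega⟩
      have h0 : ¬ (1 ≤ 0 ∧ 0 ≤ min d (n - d)) := by omega
      rw [if_pos h1, if_pos h2, if_neg h0]
      push_cast
      have := key1 hd hn
      linarith
  | (s+2) =>
      rw [coeff_X_mul, coeff_X_mul, coeff_add, coeff_derivative, coeff_X_mul, coeff_derivative]
      simp only [gPoly_coeff]
      by_cases hA : s + 2 ≤ min d (n - d)
      · have h1 : (1 ≤ s+2 ∧ s+2 ≤ min d (n + 1 - d)) := ⟨by omega, by omega⟩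
        have h2 : (1 ≤ s+2 ∧ s+2 ≤ min d (n - d)) := ⟨by omega, by omega⟩
        have h3 : (1 ≤ s+1 ∧ s+1 ≤ min d (n - d)) := ⟨by omega, by omega⟩
        rw [if_pos h1, if_pos h2, if_pos h3]
        have := keyA (d := d) (n := n) (s := s) (by omega) (by omega)
        push_cast
        push_cast at this
        linarith
      · by_cases hB : n - d = s + 1 ∧ s + 2 ≤ d
        · have h1 : (1 ≤ s+2 ∧ s+2 ≤ min d (n + 1 - d)) := ⟨by omega, by omega⟩
          have h2 : ¬ (1 ≤ s+2 ∧ s+2 ≤ min d (n - d)) := by omega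
          have h3 : (1 ≤ s+1 ∧ s+1 ≤ min d (n - d)) := ⟨by omega, by omega⟩
          rw [if_pos h1, if_neg h2, if_pos h3]
          have := keyB (d := d) (n := n) (s := s) hB.1 hB.2 (by omega)
          push_cast
          push_cast at this
          linarith
        · by_cases hC : s + 1 ≤ min d (n - d)
          · -- then s+1 = min = d (since not case A, not case B)
            have hsd : s + 1 = d := by omega
            have h1 : ¬ (1 ≤ s+2 ∧ s+2 ≤ min d (n + 1 - d)) := by omega
            have h2 : ¬ (1 ≤ s+2 ∧ s+2 ≤ min d (n - d)) := by omega
            have h3 : (1 ≤ s+1 ∧ s+1 ≤ min d (n - d)) := ⟨by omega, by omega⟩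
            rw [if_pos h3, if_neg h1, if_neg h2]
            push_cast
            rw [← hsd]
            push_cast
            ring
          · have h1 : ¬ (1 ≤ s+2 ∧ s+2 ≤ min d (n + 1 - d)) := by omega
            have h2 : ¬ (1 ≤ s+2 ∧ s+2 ≤ min d (n - d)) := by omega
            have h3 : ¬ (1 ≤ s+1 ∧ s+1 ≤ min d (n - d)) := by omega
            rw [if_neg h1, if_neg h2, if_neg h3]
            ring


lemma gPoly_eval_neg_one {d n : ℕ} (hd : 1 ≤ d) (hn : d + 1 ≤ n) :
    eval (-1) (gPoly n d) = -1 := by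
  induction n, hn using Nat.le_induction with
  | base => rw [gPoly_base hd]; simp
  | succ n hn ih =>
      have hrec := congrArg (eval (-1)) (gPoly_rec hd hn)
      simp only [eval_mul, eval_add, eval_sub, eval_C, eval_X, eval_one] at hrec
      rw [ih] at hrec
      have hnd : (0:ℝ) < (n:ℝ) - d := by
        have : (d:ℝ) + 1 ≤ n := by exact_mod_cast hn
        linarith
      have h2 : ((n:ℝ) - d) * (eval (-1) (gPoly (n+1) d) + 1) = 0 := by ring_nf; ring_nf at hrec; linarith
      rcases mul_eq_zero.mp h2 with h | h
      · linarith
      · linarith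

lemma ascRoots_eq {g : Polynomial ℝ} {L : List ℝ} (hroots : g.roots = ↑L)
    (hs : L.Pairwise (· ≤ ·)) : ascRoots g = L := by
  apply List.Perm.eq_of_pairwise' (Multiset.pairwise_sort _ _) hs ?_
  rw [← Multiset.coe_eq_coe]
  show ((g.roots.sort (· ≤ ·) : List ℝ) : Multiset ℝ) = _
  rw [Multiset.sort_eq, hroots]

lemma roots_eq_list {p : Polynomial ℝ} (hp : p ≠ 0) {R : List ℝ} (hnd : R.Nodup)
    (hlen : p.natDegree ≤ R.length) (hmem : ∀ x ∈ R, eval x p = 0) :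
    p.roots = ↑R := by
  classical
  have hle : (↑R : Multiset ℝ) ≤ p.roots := by
    rw [Multiset.le_iff_count]
    intro a
    by_cases ha : a ∈ R
    · rw [Multiset.coe_count, List.count_eq_one_of_mem hnd ha, count_roots]
      exact (rootMultiplicity_pos hp).mpr (hmem a ha)
    · rw [Multiset.coe_count, List.count_eq_zero_of_not_mem ha]
      exact Nat.zero_le _
  have hcard : Multiset.card p.roots ≤ Multiset.card (↑R : Multiset ℝ) := by
    rw [Multiset.coe_card]
    exact le_trans (p.card_roots') hlen
  exact (Multiset.eq_of_le_of_card_le hle hcard).symm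

def GInv (d n : ℕ) (M : List ℝ) : Prop :=
  M.Pairwise (· < ·) ∧ (∀ x ∈ M, x < -1) ∧ M.length + 1 = min d (n - d) ∧
    (gPoly n d).roots = ↑(M ++ ([0] : List ℝ))

lemma GInv_realRooted {d n : ℕ} {M : List ℝ} (hd : 1 ≤ d) (hn : d + 1 ≤ n)
    (h : GInv d n M) : RealRooted (gPoly n d) := by
  obtain ⟨h1, h2, h3, h4⟩ := h
  rw [RealRooted, h4, gPoly_natDegree hd hn, Multiset.coe_card]
  simp only [List.length_append, List.length_cons, List.length_nil]
  omega

lemma GInv_ascRoots {d n : ℕ} {M : List ℝ} (h : GInv d n M) :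
    ascRoots (gPoly n d) = M ++ [0] := by
  obtain ⟨h1, h2, h3, h4⟩ := h
  apply ascRoots_eq h4
  apply List.Pairwise.imp le_of_lt
  rw [List.pairwise_append]
  refine ⟨h1, by simp, ?_⟩
  intro a ha b hb
  rw [List.mem_singleton] at hb
  subst hb
  linarith [h2 a ha]


lemma gSign {d n : ℕ} (hd : 3 ≤ d) (hn : d + 1 ≤ n) {M : List ℝ}
    (hsort : M.Pairwise (· < ·)) (hneg : ∀ x ∈ M, x < -1)
    (hlen : M.length + 1 = min d (n - d))
    (hroots : (gPoly n d).roots = ↑(M ++ ([0] : List ℝ))) :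
    ∀ i ≤ M.length,
      0 < (-1:ℝ)^(M.length + 1 - i) *
        eval ((M ++ ([-1] : List ℝ)).getD i 0) (gPoly (n+1) d) := by
  intro i hi
  have hd1 : 1 ≤ d := by omega
  rcases eq_or_lt_of_le hi with heq | hlt
  · have hgd : (M ++ ([-1] : List ℝ)).getD i 0 = -1 := by
      rw [heq, List.getD_append_right _ _ _ _ (le_refl _), Nat.sub_self]
      rfl
    rw [hgd, gPoly_eval_neg_one hd1 (by omega)]
    have h1 : M.length + 1 - i = 1 := by omega
    rw [h1]
    norm_num
  · -- i < M.length : at i-th root of gPoly n d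
    set m1 := M.length with hm1
    set b := M.getD i 0 with hb
    have hgd : (M ++ ([-1] : List ℝ)).getD i 0 = b := List.getD_append _ _ _ _ hlt
    rw [hgd]
    have hbel : b = M[i]'hlt := List.getD_eq_getElem M 0 hlt
    have hbmem : b ∈ M := hbel ▸ List.getElem_mem hlt
    have hbneg : b < -1 := hneg b hbmem
    -- decompose M
    have hMdec : M = M.take i ++ b :: M.drop (i + 1) := by
      conv_lhs => rw [← List.take_append_drop i M]
      rw [List.drop_eq_getElem_cons hlt, ← hbel]
    set M₁ := M.take i with hM₁
    set M₂ := M.drop (i + 1) with hM₂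
    have hl1 : M₁.length = i := by rw [hM₁, List.length_take]; omega
    have hl2 : M₂.length = m1 - (i + 1) := by rw [hM₂, List.length_drop]
    have hdec2 : M ++ ([0] : List ℝ) = M₁ ++ b :: (M₂ ++ [0]) := by
      conv_lhs => rw [hMdec]
      simp
    have hroots2 : (gPoly n d).roots = ↑(M₁ ++ b :: (M₂ ++ ([0] : List ℝ))) := by
      rw [hroots, hdec2]
    have hg_nd : (gPoly n d).natDegree = min d (n - d) := gPoly_natDegree hd1 hn
    have hcard2 : (M₁ ++ b :: (M₂ ++ ([0] : List ℝ))).length = (gPoly n d).natDegree := by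
      simp only [List.length_append, List.length_cons, List.length_nil, hl1, hl2, hg_nd]
      omega
    have hlc : 0 < (gPoly n d).leadingCoeff := gPoly_leadingCoeff_pos hd1 hn
    -- sorted facts
    have hpw : List.Pairwise (· < ·) (M₁ ++ b :: M₂) := by rw [← hMdec]; exact hsort
    rw [List.pairwise_append] at hpw
    have h₁ : ∀ x ∈ M₁, x < b := fun x hx => hpw.2.2 x hx b List.mem_cons_self
    have h₂ : ∀ x ∈ M₂ ++ ([0] : List ℝ), b < x := by
      intro x hx
      rcases List.mem_append.mp hx with hx | hx
      · exact (List.pairwise_cons.mp hpw.2.1).1 x hx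
      · rw [List.mem_singleton] at hx
        subst hx
        linarith
    have hds := deriv_sign_root hroots2 hcard2 hlc h₁ h₂
    have hexplen : (M₂ ++ ([0] : List ℝ)).length = m1 - i := by
      simp only [List.length_append, List.length_singleton, hl2]
      omega
    rw [hexplen] at hds
    -- b is a root of gPoly n d
    have hgne : gPoly n d ≠ 0 := gPoly_ne_zero hd1 hn
    have hbroot : eval b (gPoly n d) = 0 := by
      have : b ∈ (gPoly n d).roots := by
        rw [hroots]
        exact Multiset.mem_coe.mpr (List.mem_append_left _ hbmem)
      exact (mem_roots hgne).mp this
    -- recurrence evaluated at b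
    have hrec := congrArg (eval b) (gPoly_rec hd1 hn)
    simp only [eval_mul, eval_add, eval_sub, eval_C, eval_X, eval_one] at hrec
    rw [hbroot, mul_zero] at hrec
    -- hrec : (n - d) * eval b (gPoly (n+1) d) = 0 - b * ((1 + b) * eval b (derivative (gPoly n d)))
    have hndpos : (0:ℝ) < (n:ℝ) - d := by
      have : (d:ℝ) + 1 ≤ n := by exact_mod_cast hn
      linarith
    have hbb : 0 < b * (1 + b) := by nlinarith
    set u : ℝ := (-1:ℝ)^(m1 - i) with hu
    set F : ℝ := eval b (gPoly (n+1) d) with hF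
    set G : ℝ := eval b (derivative (gPoly n d)) with hG
    have hexp : m1 + 1 - i = (m1 - i) + 1 := by omega
    rw [hexp, pow_succ]
    -- goal : 0 < u * -1 * F
    have huG : 0 < u * G := hds
    have key : ((n:ℝ) - d) * (u * F) = -(b * (1 + b)) * (u * G) := by
      linear_combination u * hrec
    have : u * F < 0 := by nlinarith [mul_pos hbb huG]
    nlinarith [this]


lemma gStep {d n : ℕ} (hd : 3 ≤ d) (hn : d + 1 ≤ n) {M : List ℝ} (hM : GInv d n M) :
    (∃ M' : List ℝ, GInv d (n + 1) M') ∧ Interlaces (gPoly n d) (gPoly (n + 1) d) := by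
  classical
  obtain ⟨hsort, hneg, hlen, hroots⟩ := hM
  have hd1 : 1 ≤ d := by omega
  have hn1 : d + 1 ≤ n + 1 := by omega
  set m1 := M.length with hm1
  set N : List ℝ := M ++ [-1] with hN
  set Nv : ℕ → ℝ := fun i => N.getD i 0 with hNv
  have hNlen : N.length = m1 + 1 := by simp [hN, hm1]
  have hNme : ∀ x ∈ N, x ≤ -1 := by
    intro x hx
    rcases List.mem_append.mp hx with h | h
    · exact le_of_lt (hneg x h)
    · rw [List.mem_singleton] at h; subst h; exact le_refl _
  have hNsort : N.Pairwise (· < ·) := by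
    rw [hN]
    show List.Pairwise (· < ·) (M ++ [-1])
    rw [List.pairwise_append]
    refine ⟨hsort, by simp, ?_⟩
    intro a ha b hb
    rw [List.mem_singleton] at hb; subst hb
    exact hneg a ha
  have hNvle : ∀ i, i ≤ m1 → Nv i ≤ -1 := by
    intro i hi
    have hilen : i < N.length := by omega
    rw [hNv]
    simp only []
    rw [List.getD_eq_getElem N 0 hilen]
    exact hNme _ (List.getElem_mem hilen)
  have hNvmono : ∀ i j, i < j → j ≤ m1 → Nv i < Nv j := by
    intro i j hij hj
    have hjlen : j < N.length := by omega
    have hilen : i < N.length := by omega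
    rw [hNv]
    simp only []
    rw [List.getD_eq_getElem N 0 hilen, List.getD_eq_getElem N 0 hjlen]
    exact List.pairwise_iff_getElem.mp hNsort i j hilen hjlen hij
  have hNvM : ∀ i, i < m1 → Nv i = M.getD i 0 := by
    intro i hi
    rw [hNv]
    simp only []
    exact List.getD_append _ _ _ _ hi
  have hNvlast : Nv m1 = -1 := by
    rw [hNv]
    simp only []
    rw [List.getD_append_right _ _ _ _ (le_refl _), Nat.sub_self]
    rfl
  -- signs of f at points of N
  have hsign := gSign hd hn hsort hneg hlen hroots
  -- roots in the gaps
  have hgaps : ∀ i, i < m1 → ∃ z, Nv i < z ∧ z < Nv (i + 1) ∧ eval z (gPoly (n+1) d) = 0 := by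
    intro i hi
    have h1 := hsign i (by omega)
    have h2 := hsign (i + 1) (by omega)
    have hlt : Nv i < Nv (i + 1) := hNvmono i (i+1) (by omega) (by omega)
    have hpow : (-1:ℝ)^(m1 + 1 - i) * (-1:ℝ)^(m1 + 1 - (i+1)) = -1 := by
      rw [← pow_add]
      have he : (m1 + 1 - i) + (m1 + 1 - (i + 1)) = 2 * (m1 - i) + 1 := by omega
      rw [he, pow_succ, pow_mul]
      norm_num
    have hprod : eval (Nv i) (gPoly (n+1) d) * eval (Nv (i+1)) (gPoly (n+1) d) < 0 := by
      nlinarith [mul_pos h1 h2]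
    exact exists_root_between hlt hprod
  have hgaps' : ∀ i, ∃ z, i < m1 → (Nv i < z ∧ z < Nv (i + 1) ∧ eval z (gPoly (n+1) d) = 0) := by
    intro i
    by_cases hi : i < m1
    · obtain ⟨z, hz⟩ := hgaps i hi
      exact ⟨z, fun _ => hz⟩
    · exact ⟨0, fun h => absurd h hi⟩
  choose A hA using hgaps'
  have hA1 : ∀ i, i < m1 → Nv i < A i := fun i hi => (hA i hi).1
  have hA2 : ∀ i, i < m1 → A i < Nv (i + 1) := fun i hi => (hA i hi).2.1
  have hA3 : ∀ i, i < m1 → eval (A i) (gPoly (n+1) d) = 0 := fun i hi => (hA i hi).2.2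
  have hAneg : ∀ i, i < m1 → A i < -1 := fun i hi =>
    lt_of_lt_of_le (hA2 i hi) (hNvle (i + 1) (by omega))
  have hAmono : ∀ i j, i < j → j < m1 → A i < A j := by
    intro i j hij hj
    have h1 : A i < Nv (i + 1) := hA2 i (by omega)
    have h2 : Nv j < A j := hA1 j hj
    rcases eq_or_lt_of_le (by omega : i + 1 ≤ j) with he | hl
    · rw [he] at h1; linarith
    · have := hNvmono (i+1) j hl (by omega)
      linarith
  set MA : List ℝ := (List.range m1).map A with hMA
  have hMAlen : MA.length = m1 := by simp [hMA]
  have hMAget : ∀ i, i < m1 → MA.getD i 0 = A i := by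
    intro i hi
    have hi' : i < MA.length := by omega
    rw [List.getD_eq_getElem MA 0 hi']
    simp [hMA]
  have hMAmem : ∀ x ∈ MA, ∃ i, i < m1 ∧ A i = x := by
    intro x hx
    rw [hMA] at hx
    obtain ⟨i, hi, rfl⟩ := List.mem_map.mp hx
    exact ⟨i, List.mem_range.mp hi, rfl⟩
  have hMAsort : MA.Pairwise (· < ·) := by
    rw [hMA, List.pairwise_map]
    apply List.Pairwise.imp_of_mem (R := (· < ·)) ?_ (List.pairwise_lt_range (n := m1))
    intro a b ha hb hab
    exact hAmono a b hab (List.mem_range.mp hb)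
  have hMAneg : ∀ x ∈ MA, x < -1 := by
    intro x hx
    obtain ⟨i, hi, rfl⟩ := hMAmem x hx
    exact hAneg i hi
  have hMAroot : ∀ x ∈ MA, eval x (gPoly (n+1) d) = 0 := by
    intro x hx
    obtain ⟨i, hi, rfl⟩ := hMAmem x hx
    exact hA3 i hi
  have h0root : eval 0 (gPoly (n+1) d) = 0 := by
    rw [← coeff_zero_eq_eval_zero, gPoly_coeff]
    simp
  have hfne : gPoly (n+1) d ≠ 0 := gPoly_ne_zero hd1 hn1
  have hfnd : (gPoly (n+1) d).natDegree = min d (n + 1 - d) := gPoly_natDegree hd1 hn1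
  have hgnd : (gPoly n d).natDegree = min d (n - d) := gPoly_natDegree hd1 hn
  have hGg : GInv d n M := ⟨hsort, hneg, hlen, hroots⟩
  have hgasc : ascRoots (gPoly n d) = M ++ [0] := GInv_ascRoots hGg
  have hRRg : RealRooted (gPoly n d) := GInv_realRooted hd1 hn hGg
  have hgdeg : (gPoly n d).natDegree = m1 + 1 := by rw [hgnd]; omega
  -- helper for sortedness of lists of negatives with 0 appended
  have append_zero_sorted : ∀ (L : List ℝ), L.Pairwise (· < ·) → (∀ x ∈ L, x < -1) →
      (L ++ [(0:ℝ)]).Pairwise (· < ·) := by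
    intro L hLs hLn
    show List.Pairwise (· < ·) (L ++ [0])
    rw [List.pairwise_append]
    refine ⟨hLs, by simp, ?_⟩
    intro a ha b hb
    rw [List.mem_singleton] at hb; subst hb
    linarith [hLn a ha]
  by_cases hcase : n < 2 * d
  · -- Case B : degree grows
    have hmf : min d (n + 1 - d) = m1 + 2 := by omega
    have hfdeg : (gPoly (n+1) d).natDegree = m1 + 2 := by rw [hfnd, hmf]
    have hdegf : 0 < (gPoly (n+1) d).degree := by
      rw [degree_eq_natDegree hfne]
      exact_mod_cast (by omega : 0 < (gPoly (n+1) d).natDegree)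
    obtain ⟨x₀, hx₀lt, hx₀sign⟩ :=
      exists_neg_sign hdegf (gPoly_leadingCoeff_pos hd1 hn1) (Nv 0)
    rw [hfdeg] at hx₀sign
    have hs0 := hsign 0 (by omega)
    have hpow : (-1:ℝ)^(m1 + 2) * (-1:ℝ)^(m1 + 1 - 0) = -1 := by
      rw [← pow_add]
      have he : (m1 + 2) + (m1 + 1 - 0) = 2 * (m1 + 1) + 1 := by omega
      rw [he, pow_succ, pow_mul]
      norm_num
    have hprod : eval x₀ (gPoly (n+1) d) * eval (Nv 0) (gPoly (n+1) d) < 0 := by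
      nlinarith [mul_pos hx₀sign hs0]
    obtain ⟨a₀, ha₀1, ha₀2, ha₀3⟩ := exists_root_between hx₀lt hprod
    have ha₀neg : a₀ < -1 := lt_of_lt_of_le ha₀2 (hNvle 0 (by omega))
    have ha₀A : ∀ i, i < m1 → a₀ < A i := by
      intro i hi
      have h1 := hA1 i hi
      rcases Nat.eq_zero_or_pos i with rfl | hpos
      · linarith
      · have := hNvmono 0 i hpos (by omega)
        linarith
    set M' : List ℝ := a₀ :: MA with hM'
    have hM'sort : M'.Pairwise (· < ·) := by
      rw [hM', List.pairwise_cons]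
      refine ⟨?_, hMAsort⟩
      intro b hb
      obtain ⟨i, hi, rfl⟩ := hMAmem b hb
      exact ha₀A i hi
    have hM'neg : ∀ x ∈ M', x < -1 := by
      intro x hx
      rcases List.mem_cons.mp hx with rfl | hx
      · exact ha₀neg
      · exact hMAneg x hx
    have hM'len : M'.length + 1 = min d (n + 1 - d) := by
      rw [hM', List.length_cons, hMAlen, hmf]
    have hRsort : (M' ++ [(0:ℝ)]).Pairwise (· < ·) := append_zero_sorted M' hM'sort hM'neg
    have hroots' : (gPoly (n+1) d).roots = ↑(M' ++ [(0:ℝ)]) := by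
      apply roots_eq_list hfne hRsort.nodup
      · simp only [List.length_append, List.length_cons, List.length_nil, hMAlen, hM',
          hfdeg]
        omega
      · intro x hx
        rcases List.mem_append.mp hx with hx | hx
        · rcases List.mem_cons.mp hx with rfl | hx
          · exact ha₀3
          · exact hMAroot x hx
        · rw [List.mem_singleton] at hx; subst hx; exact h0root
    have hGf : GInv d (n + 1) M' := ⟨hM'sort, hM'neg, hM'len, hroots'⟩
    have hRRf : RealRooted (gPoly (n+1) d) := GInv_realRooted hd1 hn1 hGf
    have hfasc : ascRoots (gPoly (n+1) d) = M' ++ [0] := GInv_ascRoots hGf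
    refine ⟨⟨M', hGf⟩, hRRg, hRRf, Or.inr (Or.inr (Or.inr ⟨?_, ?_, ?_⟩))⟩
    · rw [hfdeg, hgdeg]
    · -- ∀ i < g.natDegree, Lf.getD i ≤ Lg.getD i
      intro i hi
      rw [hgdeg] at hi
      rw [hgasc, hfasc, hM', List.cons_append]
      match i with
      | 0 =>
          rw [List.getD_cons_zero]
          rcases Nat.eq_zero_or_pos m1 with hz | hpos
          · rw [List.getD_append_right _ _ _ _ (by omega)]
            have : (0:ℕ) - M.length = 0 := by omega
            rw [this, List.getD_cons_zero]
            have := hNvle 0 (by omega)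
            linarith
          · rw [List.getD_append _ _ _ _ (by omega), ← hNvM 0 hpos]
            linarith
      | (j+1) =>
          rw [List.getD_cons_succ]
          have hj : j < m1 := by omega
          rw [List.getD_append _ _ _ _ (by omega : j < MA.length), hMAget j hj]
          rcases eq_or_lt_of_le (by omega : j + 1 ≤ m1) with he | hlt2
          · rw [List.getD_append_right _ _ _ _ (by omega)]
            have h2 : (j+1) - M.length = 0 := by omega
            rw [h2, List.getD_cons_zero]
            linarith [hAneg j hj]
          · rw [List.getD_append _ _ _ _ (by omega : j + 1 < M.length), ← hNvM (j+1) hlt2]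
            linarith [hA2 j hj]
    · -- ∀ i < g.natDegree, Lg.getD i ≤ Lf.getD (i+1)
      intro i hi
      rw [hgdeg] at hi
      rw [hgasc, hfasc, hM', List.cons_append, List.getD_cons_succ]
      rcases eq_or_lt_of_le (by omega : i + 1 ≤ m1 + 1) with he | hlt2
      · have hi' : i = m1 := by omega
        rw [hi', List.getD_append_right _ _ _ _ (by omega), List.getD_append_right _ _ _ _ (by omega)]
        have e1 : m1 - M.length = 0 := by omega
        have e2 : m1 - MA.length = 0 := by omega
        rw [e1, e2]
      · have hi' : i < m1 := by omega
        rw [List.getD_append _ _ _ _ (by omega : i < M.length),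
          List.getD_append _ _ _ _ (by omega : i < MA.length), hMAget i hi', ← hNvM i hi']
        linarith [hA1 i hi']
  · -- Case A : degree stays the same
    have hmf : min d (n + 1 - d) = m1 + 1 := by omega
    have hfdeg : (gPoly (n+1) d).natDegree = m1 + 1 := by rw [hfnd, hmf]
    have hMlen2 : MA.length + 1 = min d (n + 1 - d) := by rw [hMAlen, hmf]
    have hRsort : (MA ++ [(0:ℝ)]).Pairwise (· < ·) := append_zero_sorted MA hMAsort hMAneg
    have hroots' : (gPoly (n+1) d).roots = ↑(MA ++ [(0:ℝ)]) := by
      apply roots_eq_list hfne hRsort.nodup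
      · simp only [List.length_append, List.length_cons, List.length_nil, hMAlen, hfdeg]
        omega
      · intro x hx
        rcases List.mem_append.mp hx with hx | hx
        · exact hMAroot x hx
        · rw [List.mem_singleton] at hx; subst hx; exact h0root
    have hGf : GInv d (n + 1) MA := ⟨hMAsort, hMAneg, hMlen2, hroots'⟩
    have hRRf : RealRooted (gPoly (n+1) d) := GInv_realRooted hd1 hn1 hGf
    have hfasc : ascRoots (gPoly (n+1) d) = MA ++ [0] := GInv_ascRoots hGf
    refine ⟨⟨MA, hGf⟩, hRRg, hRRf, Or.inr (Or.inr (Or.inl ⟨?_, ?_, ?_⟩))⟩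
    · rw [hfdeg, hgdeg]
    · -- ∀ i < f.natDegree, Lg.getD i ≤ Lf.getD i
      intro i hi
      rw [hfdeg] at hi
      rw [hgasc, hfasc]
      rcases eq_or_lt_of_le (by omega : i + 1 ≤ m1 + 1) with he | hlt2
      · have hi' : i = m1 := by omega
        rw [hi', List.getD_append_right _ _ _ _ (by omega), List.getD_append_right _ _ _ _ (by omega)]
        have e1 : m1 - M.length = 0 := by omega
        have e2 : m1 - MA.length = 0 := by omega
        rw [e1, e2]
      · have hi' : i < m1 := by omega
        rw [List.getD_append _ _ _ _ (by omega : i < M.length),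
          List.getD_append _ _ _ _ (by omega : i < MA.length), hMAget i hi', ← hNvM i hi']
        linarith [hA1 i hi']
    · -- ∀ i, i + 1 < f.natDegree → Lf.getD i ≤ Lg.getD (i+1)
      intro i hi
      rw [hfdeg] at hi
      have hi' : i < m1 := by omega
      rw [hgasc, hfasc, List.getD_append _ _ _ _ (by omega : i < MA.length), hMAget i hi']
      rcases eq_or_lt_of_le (by omega : i + 1 ≤ m1) with he | hlt2
      · rw [List.getD_append_right _ _ _ _ (by omega)]
        have e1 : (i+1) - M.length = 0 := by omega
        rw [e1, List.getD_cons_zero]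
        linarith [hAneg i hi']
      · rw [List.getD_append _ _ _ _ (by omega : i + 1 < M.length), ← hNvM (i+1) hlt2]
        linarith [hA2 i hi']


/-- For fixed `d ≥ 3` and every `n ≥ d + 1`, the polynomials `g_{n,d}` and `g_{n+1,d}`
are real-rooted and `g_{n,d} ⪯ g_{n+1,d}`; hence `{g_{n,d}(t)}_{n ≥ d+1}` is a
generalized Sturm sequence. -/
theorem gPoly_sturm_fixed_d (d : ℕ) (hd : 3 ≤ d) (n : ℕ) (hn : d + 1 ≤ n) :
    RealRooted (gPoly n d) ∧ RealRooted (gPoly (n + 1) d) ∧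
      Interlaces (gPoly n d) (gPoly (n + 1) d) := by
  have hd1 : 1 ≤ d := by omega
  have hbase : GInv d (d + 1) [] := by
    refine ⟨by simp, by simp, by simp; omega, ?_⟩
    rw [gPoly_base hd1]
    simp [roots_X]
  have hInv : ∀ m, d + 1 ≤ m → ∃ M, GInv d m M := by
    intro m hm
    induction m, hm using Nat.le_induction with
    | base => exact ⟨[], hbase⟩
    | succ k hk ih =>
        obtain ⟨M, hM⟩ := ih
        exact (gStep hd hk hM).1
  obtain ⟨M, hM⟩ := hInv n hn
  obtain ⟨_, hint⟩ := gStep hd hn hM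
  exact ⟨hint.1, hint.2.1, hint⟩
end
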